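/- BPR is consistent: there is no BPR deduction with no undischarged assumptions or counterassumptions ending in a proof of ⊥ (i.e. not ∅;∅ ⊢⁺ ⊥), and there is no such deduction ending in a refutation of ⊤ (i.e. not ∅;∅ ⊢⁻ ⊤). -/
import Mathlib


/-- Atomic propositions; the set `At` includes the units `⊥` and `⊤`. -/
inductive Atom : Type where
  | bot : Atom
  | top : Atom
  | prop : ℕ → Atom
deriving DecidableEq

/-- Formulas over `At`, built with `∧`, `∨`, `→` and co-implication `↤`. -/
inductive Formula : Type where
  | atom : Atom → Formula
  | conj : Formula → Formula → Formula
  | disj : Formula → Formula → Formula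
  | impl : Formula → Formula → Formula
  | coimpl : Formula → Formula → Formula
deriving DecidableEq

abbrev Formula.bot : Formula := .atom .bot
abbrev Formula.top : Formula := .atom .top

/-- A formula is atomic iff it is a member of `At` (including `⊥` and `⊤`). -/
def Formula.isAtomic : Formula → Prop
  | .atom _ => True
  | _ => False

/-- Polarity of a statement: proof (`pos`) or refutation (`neg`). -/
inductive Side : Type where
  | pos : Side
  | neg : Side
deriving DecidableEq
/-- Natural deduction derivations of the bilateral system `BPR`.
`Deriv Γ Δ s φ` is a deduction of `φ` as a proof (`s = pos`) or refutation
(`s = neg`) from proof assumptions among `Γ` and refutation assumptions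
(counterassumptions) among `Δ`. -/
inductive Deriv : Set Formula → Set Formula → Side → Formula → Type where
  | hypP {Γ Δ : Set Formula} {φ : Formula} (h : φ ∈ Γ) : Deriv Γ Δ .pos φ
  | hypN {Γ Δ : Set Formula} {φ : Formula} (h : φ ∈ Δ) : Deriv Γ Δ .neg φ
  -- ⊤(+) and ⊥(−) axioms
  | topP {Γ Δ} : Deriv Γ Δ .pos Formula.top
  | botN {Γ Δ} : Deriv Γ Δ .neg Formula.bot
  -- implication
  | impI {Γ Δ φ ψ} : Deriv (insert φ Γ) Δ .pos ψ → Deriv Γ Δ .pos (.impl φ ψ)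
  | impE {Γ Δ φ ψ} : Deriv Γ Δ .pos (.impl φ ψ) → Deriv Γ Δ .pos φ → Deriv Γ Δ .pos ψ
  | impIN {Γ Δ φ ψ} : Deriv Γ Δ .pos φ → Deriv Γ Δ .neg ψ → Deriv Γ Δ .neg (.impl φ ψ)
  | impE1N {Γ Δ φ ψ} : Deriv Γ Δ .neg (.impl φ ψ) → Deriv Γ Δ .pos φ
  | impE2N {Γ Δ φ ψ} : Deriv Γ Δ .neg (.impl φ ψ) → Deriv Γ Δ .neg ψ
  -- conjunction
  | andI {Γ Δ φ ψ} : Deriv Γ Δ .pos φ → Deriv Γ Δ .pos ψ → Deriv Γ Δ .pos (.conj φ ψ)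
  | andE1 {Γ Δ φ ψ} : Deriv Γ Δ .pos (.conj φ ψ) → Deriv Γ Δ .pos φ
  | andE2 {Γ Δ φ ψ} : Deriv Γ Δ .pos (.conj φ ψ) → Deriv Γ Δ .pos ψ
  | andI1N {Γ Δ φ ψ} : Deriv Γ Δ .neg φ → Deriv Γ Δ .neg (.conj φ ψ)
  | andI2N {Γ Δ φ ψ} : Deriv Γ Δ .neg ψ → Deriv Γ Δ .neg (.conj φ ψ)
  | andEN {Γ Δ φ ψ s χ} : Deriv Γ Δ .neg (.conj φ ψ) →
      Deriv Γ (insert φ Δ) s χ → Deriv Γ (insert ψ Δ) s χ → Deriv Γ Δ s χ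
  -- disjunction
  | orI1 {Γ Δ φ ψ} : Deriv Γ Δ .pos φ → Deriv Γ Δ .pos (.disj φ ψ)
  | orI2 {Γ Δ φ ψ} : Deriv Γ Δ .pos ψ → Deriv Γ Δ .pos (.disj φ ψ)
  | orE {Γ Δ φ ψ s χ} : Deriv Γ Δ .pos (.disj φ ψ) →
      Deriv (insert φ Γ) Δ s χ → Deriv (insert ψ Γ) Δ s χ → Deriv Γ Δ s χ
  | orIN {Γ Δ φ ψ} : Deriv Γ Δ .neg φ → Deriv Γ Δ .neg ψ → Deriv Γ Δ .neg (.disj φ ψ)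
  | orE1N {Γ Δ φ ψ} : Deriv Γ Δ .neg (.disj φ ψ) → Deriv Γ Δ .neg φ
  | orE2N {Γ Δ φ ψ} : Deriv Γ Δ .neg (.disj φ ψ) → Deriv Γ Δ .neg ψ
  -- co-implication
  | coimpI {Γ Δ φ ψ} : Deriv Γ Δ .pos φ → Deriv Γ Δ .neg ψ → Deriv Γ Δ .pos (.coimpl φ ψ)
  | coimpE1 {Γ Δ φ ψ} : Deriv Γ Δ .pos (.coimpl φ ψ) → Deriv Γ Δ .pos φ
  | coimpE2 {Γ Δ φ ψ} : Deriv Γ Δ .pos (.coimpl φ ψ) → Deriv Γ Δ .neg ψ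
  | coimpIN {Γ Δ φ ψ} : Deriv Γ (insert ψ Δ) .neg φ → Deriv Γ Δ .neg (.coimpl φ ψ)
  | coimpEN {Γ Δ φ ψ} : Deriv Γ Δ .neg (.coimpl φ ψ) → Deriv Γ Δ .neg ψ → Deriv Γ Δ .neg φ
  -- ⊥(+) and ⊤(−): from a proof of ⊥ / refutation of ⊤, conclude any formula on either side
  | botP {Γ Δ s φ} : Deriv Γ Δ .pos Formula.bot → Deriv Γ Δ s φ
  | topN {Γ Δ s φ} : Deriv Γ Δ .neg Formula.top → Deriv Γ Δ s φ
  -- coordination rules PR(+) and PR(−)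
  | prP {Γ Δ φ ψ} : Deriv Γ Δ .pos φ → Deriv Γ Δ .neg φ → Deriv Γ Δ .pos ψ
  | prN {Γ Δ φ ψ} : Deriv Γ Δ .pos φ → Deriv Γ Δ .neg φ → Deriv Γ Δ .neg ψ

/-- `Γ;Δ ⊢⁺ φ` / `Γ;Δ ⊢⁻ φ` in `BPR`. -/
def Proves (Γ Δ : Set Formula) (s : Side) (φ : Formula) : Prop := Nonempty (Deriv Γ Δ s φ)

def ev : Formula → Bool
  | .atom .bot => false
  | .atom _ => true
  | .conj a b => ev a && ev b
  | .disj a b => ev a || ev b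
  | .impl a b => !ev a || ev b
  | .coimpl a b => ev a && !ev b

theorem sound {Γ Δ : Set Formula} {s : Side} {φ : Formula}
    (D : Deriv Γ Δ s φ) :
    (∀ γ ∈ Γ, ev γ = true) → (∀ δ ∈ Δ, ev δ = false) →
    ev φ = (s = Side.pos) := by
  induction D with
  | hypP h => intro hΓ hΔ;simp [hΓ _ h]
  | hypN h => intro hΓ hΔ;simp [hΔ _ h]
  | topP => intro hΓ hΔ;simp [ev, Formula.top]
  | botN => intro hΓ hΔ;simp [ev, Formula.bot]
  | @impI _ _ φ ψ _ ih =>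
    intro hΓ hΔ
    by_cases h : ev φ = true
    · have := ih (by intro γ hγ; rcases hγ with rfl | hγ; exact h; exact hΓ _ hγ) hΔ
      simp_all [ev]
    · simp_all [ev]
  | impE _ _ ih1 ih2 =>
    intro hΓ hΔ
    have := ih1 hΓ hΔ; have := ih2 hΓ hΔ; simp_all [ev]
  | impIN _ _ ih1 ih2 =>
    intro hΓ hΔ
    have := ih1 hΓ hΔ; have := ih2 hΓ hΔ; simp_all [ev]
  | impE1N _ ih => intro hΓ hΔ;have := ih hΓ hΔ; simp_all [ev]
  | impE2N _ ih => intro hΓ hΔ;have := ih hΓ hΔ; simp_all [ev]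
  | andI _ _ ih1 ih2 => intro hΓ hΔ;have := ih1 hΓ hΔ; have := ih2 hΓ hΔ; simp_all [ev]
  | andE1 _ ih => intro hΓ hΔ;have := ih hΓ hΔ; simp_all [ev]
  | andE2 _ ih => intro hΓ hΔ;have := ih hΓ hΔ; simp_all [ev]
  | andI1N _ ih => intro hΓ hΔ;have := ih hΓ hΔ; simp_all [ev]
  | andI2N _ ih => intro hΓ hΔ;have := ih hΓ hΔ; simp_all [ev]
  | @andEN _ _ φ ψ _ _ _ _ _ ih0 ih1 ih2 =>
    intro hΓ hΔ
    have h0' : ev φ = false ∨ ev ψ = false := by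
      have h0 := ih0 hΓ hΔ
      cases hφ : ev φ <;> cases hψ : ev ψ <;> simp_all [ev]
    rcases h0' with h | h
    · exact ih1 hΓ (by intro δ hδ; rcases hδ with rfl | hδ; exact h; exact hΔ _ hδ)
    · exact ih2 hΓ (by intro δ hδ; rcases hδ with rfl | hδ; exact h; exact hΔ _ hδ)
  | orI1 _ ih => intro hΓ hΔ;have := ih hΓ hΔ; simp_all [ev]
  | orI2 _ ih => intro hΓ hΔ;have := ih hΓ hΔ; simp_all [ev]
  | @orE _ _ φ ψ _ _ _ _ _ ih0 ih1 ih2 =>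
    intro hΓ hΔ
    have h0' : ev φ = true ∨ ev ψ = true := by
      have h0 := ih0 hΓ hΔ
      cases hφ : ev φ <;> cases hψ : ev ψ <;> simp_all [ev]
    rcases h0' with h | h
    · exact ih1 (by intro γ hγ; rcases hγ with rfl | hγ; exact h; exact hΓ _ hγ) hΔ
    · exact ih2 (by intro γ hγ; rcases hγ with rfl | hγ; exact h; exact hΓ _ hγ) hΔ
  | orIN _ _ ih1 ih2 => intro hΓ hΔ;have := ih1 hΓ hΔ; have := ih2 hΓ hΔ; simp_all [ev]
  | orE1N _ ih => intro hΓ hΔ;have := ih hΓ hΔ; simp_all [ev]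
  | orE2N _ ih => intro hΓ hΔ;have := ih hΓ hΔ; simp_all [ev]
  | coimpI _ _ ih1 ih2 => intro hΓ hΔ;have := ih1 hΓ hΔ; have := ih2 hΓ hΔ; simp_all [ev]
  | coimpE1 _ ih => intro hΓ hΔ;have := ih hΓ hΔ; simp_all [ev]
  | coimpE2 _ ih => intro hΓ hΔ;have := ih hΓ hΔ; simp_all [ev]
  | @coimpIN _ _ φ ψ _ ih =>
    intro hΓ hΔ
    by_cases h : ev ψ = false
    · have := ih hΓ (by intro δ hδ; rcases hδ with rfl | hδ; exact h; exact hΔ _ hδ)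
      simp_all [ev]
    · simp_all [ev]
  | coimpEN _ _ ih1 ih2 => intro hΓ hΔ;have := ih1 hΓ hΔ; have := ih2 hΓ hΔ; simp_all [ev]
  | botP _ ih => intro hΓ hΔ;have := ih hΓ hΔ; simp_all [ev]
  | topN _ ih => intro hΓ hΔ;have := ih hΓ hΔ; simp_all [ev]
  | prP _ _ ih1 ih2 => intro hΓ hΔ;have := ih1 hΓ hΔ; have := ih2 hΓ hΔ; simp_all
  | prN _ _ ih1 ih2 => intro hΓ hΔ;have := ih1 hΓ hΔ; have := ih2 hΓ hΔ; simp_all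

/-- `BPR` is consistent: there is no `BPR` deduction with no
undischarged assumptions or counterassumptions ending in a proof of `⊥`, and there is
no such deduction ending in a refutation of `⊤`. -/
theorem BPR_consistent :
    ¬ Proves ∅ ∅ .pos Formula.bot ∧ ¬ Proves ∅ ∅ .neg Formula.top := by
  constructor
  · rintro ⟨D⟩
    have := sound D (by simp) (by simp)
    simp [ev, Formula.bot] at this
  · rintro ⟨D⟩
    have := sound D (by simp) (by simp)
    simp [ev, Formula.top] at this
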